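/- Let s and L be positive integers such that 8 divides s and 8L ≥ 17s. Then there exists an (L,s,0) PPRIC code with exactly 6 codewords. -/

import Mathlib

/-!
Write `s = 8t`. Take six words of length 17 and weight 8 together with weights `5,4,3,2,2,1`
(total 17) such that every coordinate is covered by codewords of total weight at most 8;
repeat each coordinate `t` times and pad with zeros up to length `L`. Over `𝔽₂`,
`d(c,y) = wt c + wt y - 2|supp c ∩ supp y|`, so `d(c,y) ≤ wt c` means that `c` meets at least
half of the support of `y`. Summing this with the weights over the six codewords and counting
each coordinate of `supp y` at most 8 times gives `17 wt y ≤ 16 wt y`, hence `y = 0`.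
-/

/-- The Hamming ball of radius `ρ` centered at `x` in `𝔽₂^L`. -/
def pball (L : ℕ) (x : Fin L → ZMod 2) (ρ : ℕ) : Set (Fin L → ZMod 2) :=
  {y | hammingDist x y ≤ ρ}

/-- `C` is an `(L,s,r)` PPRIC code: a set of words of Hamming weight exactly `s`
such that `B(0,r) = ⋂_{c ∈ C} B(c, r+s)`. -/
def IsPPRIC (L s r : ℕ) (C : Set (Fin L → ZMod 2)) : Prop :=
  (∀ c ∈ C, hammingNorm c = s) ∧
  pball L 0 r = ⋂ c ∈ C, pball L c (r + s)

open Finset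

section Binary

variable {ι κ : Type*} [Fintype ι]

theorem hammingDist_add_two_mul_card_inter (c y : ι → ZMod 2) :
    hammingDist c y + 2 * #{i | c i ≠ 0 ∧ y i ≠ 0} = hammingNorm c + hammingNorm y := by
  simp only [hammingDist, hammingNorm, card_filter, mul_sum, ← sum_add_distrib]
  refine sum_congr rfl fun i _ => ?_
  generalize c i = a, y i = b
  fin_cases a <;> fin_cases b <;> rfl

theorem hammingNorm_le_two_mul_card_inter {c y : ι → ZMod 2}
    (h : hammingDist c y ≤ hammingNorm c) :
    hammingNorm y ≤ 2 * #{i | c i ≠ 0 ∧ y i ≠ 0} := by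
  have := hammingDist_add_two_mul_card_inter c y
  omega

variable [Fintype κ]

theorem sum_mul_card_inter_le (c : κ → ι → ZMod 2) (w : κ → ℕ) {W : ℕ}
    (hcover : ∀ i, ∑ k with c k i ≠ 0, w k ≤ W) (y : ι → ZMod 2) :
    ∑ k, w k * #{i | c k i ≠ 0 ∧ y i ≠ 0} ≤ W * hammingNorm y :=
  calc ∑ k, w k * #{i | c k i ≠ 0 ∧ y i ≠ 0}
      = ∑ k, ∑ i with c k i ≠ 0 ∧ y i ≠ 0, w k := by simp [mul_comm]
    _ = ∑ i with y i ≠ 0, ∑ k with c k i ≠ 0, w k :=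
        sum_comm' fun k i => by simp
    _ ≤ ∑ i with y i ≠ 0, W := sum_le_sum fun i _ => hcover i
    _ = W * hammingNorm y := by simp [hammingNorm, mul_comm]

theorem eq_zero_of_forall_hammingDist_le_hammingNorm (c : κ → ι → ZMod 2) (w : κ → ℕ) {W : ℕ}
    (hcover : ∀ i, ∑ k with c k i ≠ 0, w k ≤ W) (hW : 2 * W < ∑ k, w k) {y : ι → ZMod 2}
    (hy : ∀ k, hammingDist (c k) y ≤ hammingNorm (c k)) : y = 0 := by
  have hsum : (∑ k, w k) * hammingNorm y ≤ 2 * (W * hammingNorm y) :=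
    calc (∑ k, w k) * hammingNorm y
        ≤ ∑ k, w k * (2 * #{i | c k i ≠ 0 ∧ y i ≠ 0}) := by
          rw [sum_mul]
          exact sum_le_sum fun k _ =>
            Nat.mul_le_mul_left _ (hammingNorm_le_two_mul_card_inter (hy k))
      _ = 2 * ∑ k, w k * #{i | c k i ≠ 0 ∧ y i ≠ 0} := by
          rw [mul_sum]; exact sum_congr rfl fun k _ => by ring
      _ ≤ 2 * (W * hammingNorm y) := Nat.mul_le_mul_left _ (sum_mul_card_inter_le c w hcover y)
  rw [← hammingNorm_eq_zero]
  nlinarith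

end Binary

theorem isPPRIC_zero_range {κ : Type*} [Fintype κ] {L s : ℕ} (c : κ → Fin L → ZMod 2)
    (w : κ → ℕ) {W : ℕ} (hnorm : ∀ k, hammingNorm (c k) = s)
    (hcover : ∀ i, ∑ k with c k i ≠ 0, w k ≤ W)
    (hW : 2 * W < ∑ k, w k) : IsPPRIC L s 0 (Set.range c) := by
  refine ⟨Set.forall_mem_range.2 hnorm, Set.ext fun y => ?_⟩
  simp only [pball, Set.mem_ofPred_eq, Set.mem_iInter, Set.forall_mem_range, zero_add,
    Nat.le_zero, hammingDist_zero_left, hammingNorm_eq_zero]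
  refine ⟨?_, fun hy => eq_zero_of_forall_hammingDist_le_hammingNorm c w hcover hW fun k => ?_⟩
  · rintro rfl k
    simp [hnorm]
  · simpa [hnorm] using hy k

section Expand

variable {α β γ M : Type*} [Zero M]

theorem hammingNorm_extend_zero [Fintype α] [Fintype β] [DecidableEq M] (e : α ↪ β)
    (q : α → M) :
    hammingNorm (Function.extend e q 0) = hammingNorm q := by
  rw [hammingNorm, hammingNorm, ← card_map e]
  congr 1
  ext j
  by_cases hj : ∃ a, e a = j
  · obtain ⟨a, rfl⟩ := hj
    simp [e.injective.extend_apply]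
  · push Not at hj
    simp [hj]

theorem hammingNorm_comp_fst [Fintype α] [Fintype γ] [DecidableEq M] (p : α → M) :
    hammingNorm (fun x : α × γ => p x.1) = hammingNorm p * Fintype.card γ := by
  rw [hammingNorm, hammingNorm, ← univ_product_univ, filter_product_left (p · ≠ 0), card_product,
    card_univ]

noncomputable def expandWord (e : α × γ ↪ β) (p : α → M) : β → M :=
  Function.extend e (fun x => p x.1) 0

theorem hammingNorm_expandWord [Fintype α] [Fintype β] [Fintype γ] [DecidableEq M]
    (e : α × γ ↪ β) (p : α → M) :
    hammingNorm (expandWord e p) = hammingNorm p * Fintype.card γ := by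
  rw [expandWord, hammingNorm_extend_zero, hammingNorm_comp_fst]

theorem expandWord_injective [Nonempty γ] (e : α × γ ↪ β) :
    Function.Injective (expandWord (M := M) e) := fun p q h => funext fun a => by
  obtain ⟨g⟩ := ‹Nonempty γ›
  simpa [expandWord, e.injective.extend_apply] using congrFun h (e (a, g))

theorem sum_filter_expandWord_ne_zero_le {κ : Type*} [Fintype κ] [DecidableEq M]
    (e : α × γ ↪ β) (c : κ → α → M) (w : κ → ℕ) {W : ℕ}
    (hcover : ∀ a, ∑ k with c k a ≠ 0, w k ≤ W) (j : β) :
    ∑ k with expandWord e (c k) j ≠ 0, w k ≤ W := by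
  by_cases hj : ∃ x, e x = j
  · obtain ⟨x, rfl⟩ := hj
    simpa [expandWord, e.injective.extend_apply] using hcover x.1
  · simp [expandWord, Function.extend_apply' _ _ _ hj]

end Expand

namespace Code17

def word : Fin 6 → Fin 17 → ZMod 2 :=
  ![![0, 1, 1, 1, 1, 0, 0, 0, 0, 0, 0, 0, 0, 1, 1, 1, 1],
    ![0, 0, 0, 0, 0, 1, 1, 1, 1, 1, 1, 1, 1, 0, 0, 0, 0],
    ![1, 0, 0, 0, 0, 1, 1, 1, 0, 0, 0, 0, 0, 1, 1, 1, 1],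
    ![1, 1, 1, 0, 0, 0, 0, 0, 1, 1, 1, 1, 1, 0, 0, 0, 0],
    ![1, 0, 0, 1, 1, 0, 0, 0, 1, 1, 1, 1, 1, 0, 0, 0, 0],
    ![1, 1, 1, 1, 1, 1, 1, 1, 0, 0, 0, 0, 0, 0, 0, 0, 0]]

def weight : Fin 6 → ℕ := ![5, 4, 3, 2, 2, 1]

theorem hammingNorm_word : ∀ k, hammingNorm (word k) = 8 := by decide

theorem word_injective : Function.Injective word := by decide

theorem sum_weight : ∑ k, weight k = 17 := by decide

theorem sum_filter_word_ne_zero_le :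
    ∀ b, ∑ k with word k b ≠ 0, weight k ≤ 8 := by decide

end Code17

open Code17 in
theorem stmt14_general (L s : ℕ) (hs : 0 < s)
    (hdvd : 8 ∣ s) (hratio : 17 * s ≤ 8 * L) :
    ∃ C : Finset (Fin L → ZMod 2), IsPPRIC L s 0 ↑C ∧ C.card = 6 := by
  obtain ⟨t, rfl⟩ := hdvd
  have : NeZero t := ⟨by omega⟩
  let e : Fin 17 × Fin t ↪ Fin L :=
    finProdFinEquiv.toEmbedding.trans (Fin.castLEEmb (by omega))
  let c k := expandWord e (word k)
  have hc : Function.Injective c := (expandWord_injective e).comp word_injective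
  refine ⟨univ.image c, ?_, by rw [card_image_of_injective _ hc, card_fin]⟩
  rw [coe_image, coe_univ, Set.image_univ]
  refine isPPRIC_zero_range c weight (W := 8) (fun k => ?_)
    (sum_filter_expandWord_ne_zero_le e _ _ sum_filter_word_ne_zero_le) (by simp [sum_weight])
  simp [c, hammingNorm_expandWord, hammingNorm_word, mul_comm]

theorem stmt14 (L s : ℕ) (hs : 0 < s) (hL0 : 0 < L)
    (hdvd : 8 ∣ s) (hratio : 17 * s ≤ 8 * L) :
    ∃ C : Finset (Fin L → ZMod 2), IsPPRIC L s 0 ↑C ∧ C.card = 6 :=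
  stmt14_general L s hs hdvd hratio
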